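/- arXiv:1711.02936 — 2 statements merged into one kernel-verified Lean document; each statement's English description precedes it below -/
import Mathlib

section
/- If P ⊆ ℝ^a and Q ⊆ ℝ^b are reflexive lattice polytopes, then their free sum P ⊕ Q ⊆ ℝ^{a+b} is a reflexive lattice polytope. -/
open Set

noncomputable section

/-- Standard dot product on `ℝ^d`. -/
def dotp {d : ℕ} (v x : Fin d → ℝ) : ℝ := ∑ i, v i * x i

/-- Polar dual `P^∨ = {v | ⟨v,x⟩ ≤ 1 ∀ x ∈ P}`. -/
def polarDual {d : ℕ} (P : Set (Fin d → ℝ)) : Set (Fin d → ℝ) :=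
  {v | ∀ x ∈ P, dotp v x ≤ 1}

/-- A point of `ℝ^d` lying in the lattice `ℤ^d`. -/
def IsLatticePt {d : ℕ} (x : Fin d → ℝ) : Prop := ∀ i, ∃ n : ℤ, x i = (n : ℝ)

/-- A polytope: convex hull of finitely many points. -/
def IsPolytope {d : ℕ} (P : Set (Fin d → ℝ)) : Prop :=
  ∃ V : Finset (Fin d → ℝ), P = convexHull ℝ (V : Set (Fin d → ℝ))

/-- A lattice polytope: convex hull of finitely many lattice points. -/
def IsLatticePolytope {d : ℕ} (P : Set (Fin d → ℝ)) : Prop :=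
  ∃ V : Finset (Fin d → ℝ), (∀ x ∈ V, IsLatticePt x) ∧
    P = convexHull ℝ (V : Set (Fin d → ℝ))

/-- `F` is a face of `P`: the subset of `P` where some linear functional bounded
above on `P` attains its maximum. -/
def IsFace {d : ℕ} (P F : Set (Fin d → ℝ)) : Prop :=
  ∃ (c : Fin d → ℝ) (b : ℝ), (∀ x ∈ P, dotp c x ≤ b) ∧ F = {x ∈ P | dotp c x = b}

/-- Dimension of a subset of `ℝ^d` (dimension of its affine hull). -/
def fdim {d : ℕ} (F : Set (Fin d → ℝ)) : ℕ := Module.finrank ℝ (vectorSpan ℝ F)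

/-- A facet is a face of dimension `d - 1`. -/
def IsFacet {d : ℕ} (P F : Set (Fin d → ℝ)) : Prop :=
  IsFace P F ∧ fdim F = d - 1

/-- The lattice `ℤ^d` sitting inside `ℝ^d`, as a `ℤ`-submodule. -/
def latticeSubmodule (d : ℕ) : Submodule ℤ (Fin d → ℝ) :=
  Submodule.span ℤ {x : Fin d → ℝ | IsLatticePt x}

/-- A set of vectors forms a `ℤ`-basis of the lattice `ℤ^d`:
it is `ℝ`-linearly independent and `ℤ`-spans the lattice. -/
def IsLatticeBasisSet {d : ℕ} (S : Set (Fin d → ℝ)) : Prop :=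
  LinearIndependent ℝ (fun v : S => (v : Fin d → ℝ)) ∧
    Submodule.span ℤ S = latticeSubmodule d

/-- A smooth Fano polytope: full-dimensional lattice polytope with `0` in its
interior, such that the vertex set of every facet is a `ℤ`-basis of `ℤ^d`. -/
def IsSmoothFano {d : ℕ} (P : Set (Fin d → ℝ)) : Prop :=
  IsLatticePolytope P ∧ (0 : Fin d → ℝ) ∈ interior P ∧ fdim P = d ∧
    ∀ F, IsFacet P F → IsLatticeBasisSet (Set.extremePoints ℝ F)

/-- A reflexive polytope: full-dimensional lattice polytope with `0` in its
interior whose polar dual is again a lattice polytope. -/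
def IsReflexive {d : ℕ} (P : Set (Fin d → ℝ)) : Prop :=
  IsLatticePolytope P ∧ fdim P = d ∧ (0 : Fin d → ℝ) ∈ interior P ∧
    IsLatticePolytope (polarDual P)

/-- Free sum `P ⊕ Q = conv((P × {0}) ∪ ({0} × Q))`. -/
def freeSum {a b : ℕ} (P : Set (Fin a → ℝ)) (Q : Set (Fin b → ℝ)) :
    Set (Fin (a + b) → ℝ) :=
  convexHull ℝ ((fun v => Fin.append v (0 : Fin b → ℝ)) '' P ∪
    (fun w => Fin.append (0 : Fin a → ℝ) w) '' Q)

/-- Product `P × Q = {(x,y) | x ∈ P, y ∈ Q}`. -/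
def prodPoly {a b : ℕ} (P : Set (Fin a → ℝ)) (Q : Set (Fin b → ℝ)) :
    Set (Fin (a + b) → ℝ) :=
  {z | ∃ x ∈ P, ∃ y ∈ Q, z = Fin.append x y}

/-- Lattice equivalence: `Q = A · P` with `A ∈ GL_d(ℤ)`. -/
def LatticeEquiv {d : ℕ} (P Q : Set (Fin d → ℝ)) : Prop :=
  ∃ A : Matrix (Fin d) (Fin d) ℤ, IsUnit A.det ∧
    Q = (fun x => (A.map (Int.cast : ℤ → ℝ)).mulVec x) '' P

/-- Affine unimodular equivalence: `Q = A · P + t` with `A ∈ GL_d(ℤ)`, `t ∈ ℤ^d`. -/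
def AffineLatticeEquiv {d : ℕ} (P Q : Set (Fin d → ℝ)) : Prop :=
  ∃ (A : Matrix (Fin d) (Fin d) ℤ) (t : Fin d → ℤ), IsUnit A.det ∧
    Q = (fun x => (A.map (Int.cast : ℤ → ℝ)).mulVec x + fun i => (t i : ℝ)) '' P

/-- Combinatorial isomorphism: an inclusion-preserving bijection of face lattices. -/
def CombIso {n : ℕ} (P Q : Set (Fin n → ℝ)) : Prop :=
  ∃ φ : {F : Set (Fin n → ℝ) // IsFace P F} ≃ {F : Set (Fin n → ℝ) // IsFace Q F},
    ∀ F G, F.1 ⊆ G.1 ↔ (φ F).1 ⊆ (φ G).1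

/-!
Identify `ℝ^(a+b)` with `ℝ^a × ℝ^b`. The free sum of `conv V` and `conv W` is the convex hull of
`V × 0 ∪ 0 × W`, so it is a lattice polytope. Since `(x, y)` is the midpoint of `(2x, 0)` and
`(0, 2y)`, the free sum contains a neighbourhood of `0`, and is therefore full-dimensional.
Finally `⟨(u, w), (x, 0)⟩ = ⟨u, x⟩` and `⟨(u, w), (0, y)⟩ = ⟨w, y⟩`, so the polar dual of
`P ⊕ Q` is `P^∨ × Q^∨`, a product of lattice polytopes.
-/

open Filter Topology

namespace Fin

def appendLinearEquiv (R : Type*) [Semiring R] (m n : ℕ) :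
    ((Fin m → R) × (Fin n → R)) ≃ₗ[R] (Fin (m + n) → R) where
  __ := Fin.appendEquiv m n
  map_add' x y := by ext i; cases i using Fin.addCases <;> simp
  map_smul' c x := by ext i; cases i using Fin.addCases <;> simp

@[simp]
lemma appendLinearEquiv_apply (R : Type*) [Semiring R] {m n : ℕ}
    (p : (Fin m → R) × (Fin n → R)) : appendLinearEquiv R m n p = Fin.append p.1 p.2 :=
  rfl

end Fin

section ProdSpace

variable {E F : Type*} [AddCommGroup E] [Module ℝ E] [AddCommGroup F] [Module ℝ F]

lemma add_mem_convexHull_union {s t : Set E} {x y : E} (hx : (2 : ℝ) • x ∈ s)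
    (hy : (2 : ℝ) • y ∈ t) : x + y ∈ convexHull ℝ (s ∪ t) := by
  have hmid := convex_convexHull ℝ (s ∪ t) (subset_convexHull ℝ _ (Or.inl hx))
    (subset_convexHull ℝ _ (Or.inr hy)) (by norm_num : (0 : ℝ) ≤ 1 / 2)
    (by norm_num : (0 : ℝ) ≤ 1 / 2) (by norm_num)
  simpa [smul_smul] using hmid

lemma convexHull_inl_union_inr_mem_nhds_zero [TopologicalSpace E] [TopologicalSpace F]
    [ContinuousConstSMul ℝ E] [ContinuousConstSMul ℝ F] {s : Set E} {t : Set F}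
    (hs : s ∈ 𝓝 0) (ht : t ∈ 𝓝 0) :
    convexHull ℝ (LinearMap.inl ℝ E F '' s ∪ LinearMap.inr ℝ E F '' t) ∈ 𝓝 0 := by
  have hdouble : Tendsto (fun p : E × F => (2 : ℝ) • p) (𝓝 0) (𝓝 0) := by
    simpa using (continuous_const_smul (2 : ℝ)).tendsto (0 : E × F)
  filter_upwards [hdouble (prod_mem_nhds hs ht)] with ⟨x, y⟩ ⟨hx, hy⟩
  rw [← Prod.fst_add_snd (x, y)]
  exact add_mem_convexHull_union ⟨_, hx, by simp⟩ ⟨_, hy, by simp⟩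

end ProdSpace

lemma fdim_eq_of_mem_interior {d : ℕ} {s : Set (Fin d → ℝ)} {x : Fin d → ℝ}
    (hx : x ∈ interior s) : fdim s = d := by
  have hspan : affineSpan ℝ s = ⊤ :=
    top_unique <| (isOpen_interior.affineSpan_eq_top ⟨x, hx⟩).ge.trans
      (affineSpan_mono ℝ interior_subset)
  rw [fdim, ← direction_affineSpan, hspan, AffineSubspace.direction_top, finrank_top,
    Module.finrank_fin_fun]

lemma isLatticePt_zero {d : ℕ} : IsLatticePt (0 : Fin d → ℝ) :=
  fun _ => ⟨0, by simp⟩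

lemma IsLatticePt.append {a b : ℕ} {x : Fin a → ℝ} {y : Fin b → ℝ} (hx : IsLatticePt x)
    (hy : IsLatticePt y) : IsLatticePt (Fin.append x y) := by
  intro i
  cases i using Fin.addCases <;> simp [hx _, hy _]

lemma dotp_append {a b : ℕ} (u x : Fin a → ℝ) (w y : Fin b → ℝ) :
    dotp (Fin.append u w) (Fin.append x y) = dotp u x + dotp w y := by
  simp [dotp, Fin.sum_univ_add]

lemma polarDual_convexHull {d : ℕ} (s : Set (Fin d → ℝ)) :
    polarDual (convexHull ℝ s) = polarDual s := by
  refine Subset.antisymm (fun v hv x hx => hv x (subset_convexHull ℝ s hx)) fun v hv x hx => ?_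
  have hlin : IsLinearMap ℝ (dotp v) := ⟨dotProduct_add v, fun c x => dotProduct_smul c v x⟩
  exact convexHull_min hv (convex_halfSpace_le hlin 1) hx

section FreeSum

variable {a b : ℕ}

lemma freeSum_eq_image (P : Set (Fin a → ℝ)) (Q : Set (Fin b → ℝ)) :
    freeSum P Q = Fin.appendLinearEquiv ℝ a b ''
      convexHull ℝ (LinearMap.inl ℝ _ _ '' P ∪ LinearMap.inr ℝ _ _ '' Q) := by
  rw [← LinearEquiv.coe_toLinearMap, LinearMap.image_convexHull, image_union, image_image,
    image_image]
  rfl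

lemma prodPoly_eq_image (P : Set (Fin a → ℝ)) (Q : Set (Fin b → ℝ)) :
    prodPoly P Q = Fin.appendLinearEquiv ℝ a b '' P ×ˢ Q := by
  ext z
  simp [prodPoly, eq_comm, and_assoc]

lemma appendLinearEquiv_mem_prodPoly {P : Set (Fin a → ℝ)} {Q : Set (Fin b → ℝ)}
    {p : (Fin a → ℝ) × (Fin b → ℝ)} :
    Fin.appendLinearEquiv ℝ a b p ∈ prodPoly P Q ↔ p ∈ P ×ˢ Q := by
  rw [prodPoly_eq_image, (Fin.appendLinearEquiv ℝ a b).injective.mem_set_image]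

lemma polarDual_freeSum (P : Set (Fin a → ℝ)) (Q : Set (Fin b → ℝ)) :
    polarDual (freeSum P Q) = prodPoly (polarDual P) (polarDual Q) := by
  ext v
  obtain ⟨⟨u, w⟩, rfl⟩ := (Fin.appendLinearEquiv ℝ a b).surjective v
  rw [appendLinearEquiv_mem_prodPoly, freeSum, polarDual_convexHull]
  simp only [polarDual, mem_ofPred_eq, mem_union, or_imp, forall_and, forall_mem_image,
    Fin.appendLinearEquiv_apply, dotp_append, mem_prod]
  simp [dotp]

lemma IsLatticePolytope.freeSum {P : Set (Fin a → ℝ)} {Q : Set (Fin b → ℝ)}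
    (hP : IsLatticePolytope P) (hQ : IsLatticePolytope Q) :
    IsLatticePolytope (freeSum P Q) := by
  classical
  obtain ⟨V, hV, rfl⟩ := hP
  obtain ⟨W, hW, rfl⟩ := hQ
  refine ⟨(V.image (LinearMap.inl ℝ _ _) ∪ W.image (LinearMap.inr ℝ _ _)).image
    (Fin.appendLinearEquiv ℝ a b), ?_, ?_⟩
  · simp only [Finset.mem_image, Finset.mem_union]
    rintro _ ⟨_, ⟨x, hx, rfl⟩ | ⟨y, hy, rfl⟩, rfl⟩
    exacts [(hV x hx).append isLatticePt_zero, isLatticePt_zero.append (hW y hy)]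
  · rw [freeSum_eq_image, LinearMap.image_convexHull, LinearMap.image_convexHull,
      convexHull_convexHull_union_left, convexHull_convexHull_union_right,
      ← LinearEquiv.coe_toLinearMap, LinearMap.image_convexHull]
    push_cast
    rfl

lemma IsLatticePolytope.prodPoly {P : Set (Fin a → ℝ)} {Q : Set (Fin b → ℝ)}
    (hP : IsLatticePolytope P) (hQ : IsLatticePolytope Q) :
    IsLatticePolytope (prodPoly P Q) := by
  classical
  obtain ⟨V, hV, rfl⟩ := hP
  obtain ⟨W, hW, rfl⟩ := hQ
  refine ⟨(V ×ˢ W).image (Fin.appendLinearEquiv ℝ a b), ?_, ?_⟩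
  · simp only [Finset.mem_image, Finset.mem_product]
    rintro _ ⟨⟨x, y⟩, ⟨hx, hy⟩, rfl⟩
    exact (hV x hx).append (hW y hy)
  · rw [prodPoly_eq_image, ← convexHull_prod, ← LinearEquiv.coe_toLinearMap,
      LinearMap.image_convexHull]
    push_cast
    rfl

lemma zero_mem_interior_freeSum {P : Set (Fin a → ℝ)} {Q : Set (Fin b → ℝ)}
    (hP : 0 ∈ interior P) (hQ : 0 ∈ interior Q) : 0 ∈ interior (freeSum P Q) := by
  rw [mem_interior_iff_mem_nhds] at hP hQ ⊢
  let e := Fin.appendLinearEquiv ℝ a b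
  have hcont : Continuous e.symm := e.symm.toLinearMap.continuous_of_finiteDimensional
  rw [freeSum_eq_image, LinearEquiv.image_eq_preimage_symm]
  exact hcont.continuousAt.preimage_mem_nhds <| by
    simpa using convexHull_inl_union_inr_mem_nhds_zero hP hQ

end FreeSum

/-- The free sum of reflexive polytopes is reflexive. -/
theorem stmt9 {a b : ℕ} (P : Set (Fin a → ℝ)) (Q : Set (Fin b → ℝ))
    (hP : IsReflexive P) (hQ : IsReflexive Q) :
    IsReflexive (freeSum P Q) := by
  obtain ⟨hPlat, -, hP0, hPdual⟩ := hP
  obtain ⟨hQlat, -, hQ0, hQdual⟩ := hQ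
  have h0 := zero_mem_interior_freeSum hP0 hQ0
  refine ⟨hPlat.freeSum hQlat, fdim_eq_of_mem_interior h0, h0, ?_⟩
  rw [polarDual_freeSum]
  exact hPdual.prodPoly hQdual
end
end

section
/- Let P ⊆ ℝ^d be a smooth Fano polytope. Then the bipyramid conv((P × {0}) ∪ {−e_{d+1}, e_{d+1}}) ⊆ ℝ^{d+1} is a smooth Fano polytope. -/
open Set

noncomputable section

/-!
Write `Q` for the bipyramid and `e` for the last basis vector. A neighbourhood of `0` in
`ℝ^{d+1}` lies in the convex hull of `P × {0}` and the segment `[-e, e]`, so `0` is interior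
to `Q`. A facet of `Q` is cut out by a functional `(c', γ)` at a level `b`, which is positive
because `0` is interior. It is the convex hull of the generators on which the level `b` is
attained: `G × {0}` with `G = {x ∈ P | c' ⬝ x = b}`, and at most one apex `±e`. Without an apex
the facet would have dimension `dim G < d`, so it is the pyramid over `G × {0}` with apex `±e`;
then `G` is a facet of `P`, and the vertices of the pyramid, those of `G` together with `±e`,
form a lattice basis of `ℤ^{d+1}` because those of `G` form one of `ℤ^d`.
-/

section Faces

variable {n : ℕ}

lemma dotp_eq_dotProduct (v x : Fin n → ℝ) : dotp v x = v ⬝ᵥ x := rfl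

@[simp] lemma zero_dotp (x : Fin n → ℝ) : dotp 0 x = 0 := zero_dotProduct x

lemma isLinearMap_dotp (c : Fin n → ℝ) : IsLinearMap ℝ (dotp c) :=
  ⟨dotProduct_add c, fun r x => dotProduct_smul r c x⟩

lemma IsFace.isExtreme {K F : Set (Fin n → ℝ)} (hF : IsFace K F) : IsExtreme ℝ K F := by
  obtain ⟨c, b, hle, rfl⟩ := hF
  refine ⟨sep_subset _ _, ?_⟩
  rintro x₁ hx₁ x₂ hx₂ x ⟨-, hx⟩ ⟨a₁, a₂, ha₁, ha₂, hsum, rfl⟩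
  have hcomb : a₁ * dotp c x₁ + a₂ * dotp c x₂ = b := by
    simpa [dotp_eq_dotProduct, dotProduct_add, dotProduct_smul] using hx
  have hgap : a₁ * (b - dotp c x₁) + a₂ * (b - dotp c x₂) = 0 := by
    linear_combination b * hsum - hcomb
  refine ⟨hx₁, le_antisymm (hle x₁ hx₁) (not_lt.1 fun h => ?_)⟩
  nlinarith [mul_pos ha₁ (sub_pos.2 h), mul_nonneg ha₂.le (sub_nonneg.2 (hle x₂ hx₂))]

/-- The generators strictly below level `b` have their convex hull strictly below it, so they
carry no weight at a point of level `b`. -/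
lemma sep_convexHull_dotp_eq {S : Set (Fin n → ℝ)} {c : Fin n → ℝ} {b : ℝ}
    (hle : ∀ x ∈ S, dotp c x ≤ b) :
    {x ∈ convexHull ℝ S | dotp c x = b} = convexHull ℝ {x ∈ S | dotp c x = b} := by
  set T := {x ∈ S | dotp c x = b}
  set U := {x ∈ S | dotp c x < b}
  have hT : convexHull ℝ T ⊆ {x | dotp c x = b} :=
    convexHull_min (fun x hx => hx.2) (convex_hyperplane (isLinearMap_dotp c) b)
  have hU : convexHull ℝ U ⊆ {x | dotp c x < b} :=
    convexHull_min (fun x hx => hx.2) (convex_halfSpace_lt (isLinearMap_dotp c) b)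
  have hS : S = T ∪ U := by
    ext x
    simp only [mem_union, mem_sep_iff, T, U]
    constructor
    · intro hx
      rcases (hle x hx).eq_or_lt with h | h
      exacts [Or.inl ⟨hx, h⟩, Or.inr ⟨hx, h⟩]
    · rintro (⟨hx, -⟩ | ⟨hx, -⟩) <;> exact hx
  refine Subset.antisymm ?_ fun x hx => ⟨convexHull_mono (sep_subset _ _) hx, hT hx⟩
  rintro x ⟨hx, hxb⟩
  rcases T.eq_empty_or_nonempty with hTe | hTne
  · rw [hS, hTe, empty_union] at hx
    exact absurd hxb (hU hx).ne
  rcases U.eq_empty_or_nonempty with hUe | hUne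
  · rwa [hS, hUe, union_empty] at hx
  rw [hS, convexHull_union hTne hUne, mem_convexJoin] at hx
  obtain ⟨t, ht, u, hu, a, a', ha, ha', hsum, rfl⟩ := hx
  have hval : a * dotp c t + a' * dotp c u = b := by
    simpa [dotp_eq_dotProduct, dotProduct_add, dotProduct_smul] using hxb
  have hct : dotp c t = b := hT ht
  have hcu : dotp c u < b := hU hu
  have hzero : a' * (b - dotp c u) = 0 := by
    rw [hct] at hval
    linear_combination b * hsum - hval
  obtain rfl : a' = 0 := (mul_eq_zero.1 hzero).resolve_right (sub_pos.2 hcu).ne'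
  obtain rfl : a = 1 := by linarith
  simpa using ht

lemma isFace_convexHull_sep {S : Set (Fin n → ℝ)} {c : Fin n → ℝ} {b : ℝ}
    (hle : ∀ x ∈ S, dotp c x ≤ b) :
    IsFace (convexHull ℝ S) (convexHull ℝ {x ∈ S | dotp c x = b}) :=
  ⟨c, b, fun _ hx => convexHull_min hle (convex_halfSpace_le (isLinearMap_dotp c) b) hx,
    (sep_convexHull_dotp_eq hle).symm⟩

lemma eq_zero_of_forall_dotp_nonpos {K : Set (Fin n → ℝ)} (hK : (0 : Fin n → ℝ) ∈ interior K)
    {c : Fin n → ℝ} (hc : ∀ x ∈ K, dotp c x ≤ 0) : c = 0 := by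
  have hlim : Filter.Tendsto (fun t : ℝ => t • c) (nhdsWithin 0 (Ioi 0)) (nhds 0) :=
    (Continuous.tendsto' (f := fun t : ℝ => t • c) (by fun_prop) 0 0 (zero_smul ℝ c)).mono_left
      nhdsWithin_le_nhds
  obtain ⟨t, htK, ht⟩ :=
    ((hlim.eventually (mem_interior_iff_mem_nhds.1 hK)).and self_mem_nhdsWithin).exists
  have htc : t * (c ⬝ᵥ c) ≤ 0 := by simpa [dotp_eq_dotProduct, dotProduct_smul] using hc _ htK
  have hcc : c ⬝ᵥ c ≤ 0 := nonpos_of_mul_nonpos_right htc ht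
  exact dotProduct_self_eq_zero.1 (le_antisymm hcc (dotProduct_self_star_nonneg c))

lemma pos_of_sep_dotp_eq_ne {K : Set (Fin n → ℝ)} (h0 : (0 : Fin n → ℝ) ∈ interior K)
    {c : Fin n → ℝ} {b : ℝ} (hle : ∀ x ∈ K, dotp c x ≤ b) (hne : {x ∈ K | dotp c x = b} ≠ K) :
    0 < b := by
  have hb : 0 ≤ b := by simpa [dotp_eq_dotProduct] using hle 0 (interior_subset h0)
  refine hb.lt_of_ne fun hb0 => hne ?_
  subst hb0
  obtain rfl := eq_zero_of_forall_dotp_nonpos h0 hle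
  simp

end Faces

section Dimension

variable {n : ℕ}

lemma fdim_convexHull (S : Set (Fin n → ℝ)) : fdim (convexHull ℝ S) = fdim S := by
  rw [fdim, fdim, ← direction_affineSpan, affineSpan_convexHull, direction_affineSpan]

lemma fdim_insert_le (S : Set (Fin n → ℝ)) (a : Fin n → ℝ) : fdim (insert a S) ≤ fdim S + 1 :=
  finrank_vectorSpan_insert_le_set ℝ S a

lemma fdim_image_le {m : ℕ} (f : (Fin n → ℝ) →ₗ[ℝ] (Fin m → ℝ)) (S : Set (Fin n → ℝ)) :
    fdim (f '' S) ≤ fdim S := by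
  have h : (vectorSpan ℝ S).map f = vectorSpan ℝ (f '' S) := f.toAffineMap.map_vectorSpan
  rw [fdim, fdim, ← h]
  exact Submodule.finrank_map_le _ _

lemma fdim_eq_of_nonempty_interior {S : Set (Fin n → ℝ)} (h : (interior S).Nonempty) :
    fdim S = n := by
  have htop : affineSpan ℝ S = ⊤ :=
    top_unique (isOpen_interior.affineSpan_eq_top h ▸ affineSpan_mono ℝ interior_subset)
  rw [fdim, ← direction_affineSpan, htop, AffineSubspace.direction_top, finrank_top,
    Module.finrank_fin_fun]

lemma fdim_lt_of_forall_dotp_eq (hn : 0 < n) {S : Set (Fin n → ℝ)} {c : Fin n → ℝ} {b : ℝ}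
    (hb : b ≠ 0) (hS : ∀ x ∈ S, dotp c x = b) : fdim S < n := by
  rcases S.eq_empty_or_nonempty with rfl | ⟨x₀, hx₀⟩
  · rwa [fdim, vectorSpan_empty, finrank_bot]
  set f := (isLinearMap_dotp c).mk' (dotp c)
  have hker : vectorSpan ℝ S ≤ LinearMap.ker f := by
    rw [vectorSpan_def, Submodule.span_le]
    rintro _ ⟨x, hx, y, hy, rfl⟩
    simp [f, (isLinearMap_dotp c).map_sub, hS x hx, hS y hy]
  have hne : vectorSpan ℝ S ≠ ⊤ := fun htop =>
    hb (by simpa [f, hS x₀ hx₀] using hker (htop ▸ Submodule.mem_top : x₀ ∈ vectorSpan ℝ S))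
  exact (Submodule.finrank_lt hne).trans_eq (Module.finrank_fin_fun ℝ)

end Dimension

section Lattice

variable {n : ℕ}

lemma mem_latticeSubmodule_iff {x : Fin n → ℝ} : x ∈ latticeSubmodule n ↔ IsLatticePt x := by
  refine ⟨fun hx => ?_, fun hx => Submodule.subset_span hx⟩
  induction hx using Submodule.span_induction with
  | mem x hx => exact hx
  | zero => exact fun _ => ⟨0, by simp⟩
  | add x y _ _ hx hy =>
    intro i
    obtain ⟨a, ha⟩ := hx i
    obtain ⟨b, hb⟩ := hy i
    exact ⟨a + b, by simp [ha, hb]⟩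
  | smul k x _ hx =>
    intro i
    obtain ⟨a, ha⟩ := hx i
    exact ⟨k * a, by simp [ha]⟩

lemma IsLatticePolytope.convex {P : Set (Fin n → ℝ)} (hP : IsLatticePolytope P) :
    Convex ℝ P := by
  obtain ⟨V, -, rfl⟩ := hP
  exact convex_convexHull ℝ _

end Lattice

lemma extremePoints_image_of_injective {E F : Type*} [AddCommGroup E] [Module ℝ E]
    [AddCommGroup F] [Module ℝ F] {f : E →ₗ[ℝ] F} (hf : Function.Injective f) (s : Set E) :
    extremePoints ℝ (f '' s) = f '' extremePoints ℝ s := by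
  have hseg : ∀ x y, f '' openSegment ℝ x y = openSegment ℝ (f x) (f y) :=
    fun x y => image_openSegment ℝ f.toAffineMap x y
  ext z
  constructor
  · rintro hz
    obtain ⟨⟨x, hx, rfl⟩, h⟩ := mem_extremePoints.1 hz
    refine mem_image_of_mem f (mem_extremePoints.2 ⟨hx, fun x₁ h₁ x₂ h₂ hx' => ?_⟩)
    have := h _ (mem_image_of_mem f h₁) _ (mem_image_of_mem f h₂)
      (hseg x₁ x₂ ▸ mem_image_of_mem f hx')
    exact ⟨hf this.1, hf this.2⟩
  · rintro ⟨x, hx, rfl⟩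
    obtain ⟨hx, h⟩ := mem_extremePoints.1 hx
    refine mem_extremePoints.2 ⟨mem_image_of_mem f hx, ?_⟩
    rintro _ ⟨x₁, h₁, rfl⟩ _ ⟨x₂, h₂, rfl⟩ hx'
    rw [← hseg, hf.mem_set_image] at hx'
    obtain ⟨e₁, e₂⟩ := h x₁ h₁ x₂ h₂ hx'
    exact ⟨congrArg f e₁, congrArg f e₂⟩

section Bipyramid

variable {d : ℕ}

def snocZero (d : ℕ) : (Fin d → ℝ) →ₗ[ℝ] (Fin (d + 1) → ℝ) where
  toFun x := Fin.snoc x 0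
  map_add' x y := by
    ext i
    refine Fin.lastCases ?_ (fun j => ?_) i <;> simp
  map_smul' r x := by
    ext i
    refine Fin.lastCases ?_ (fun j => ?_) i <;> simp

def apex (d : ℕ) (t : ℝ) : Fin (d + 1) → ℝ := Fin.snoc 0 t

def bipyramid (P : Set (Fin d → ℝ)) : Set (Fin (d + 1) → ℝ) :=
  convexHull ℝ (snocZero d '' P ∪ {apex d (-1), apex d 1})

@[simp] lemma snocZero_castSucc (x : Fin d → ℝ) (j : Fin d) : snocZero d x j.castSucc = x j := by
  simp [snocZero]

@[simp] lemma snocZero_last (x : Fin d → ℝ) : snocZero d x (Fin.last d) = 0 := by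
  simp [snocZero]

@[simp] lemma apex_castSucc (t : ℝ) (j : Fin d) : apex d t j.castSucc = 0 := by
  simp [apex]

@[simp] lemma apex_last (t : ℝ) : apex d t (Fin.last d) = t := by
  simp [apex]

@[simp] lemma init_apex (t : ℝ) : Fin.init (apex d t) = 0 := by
  simp [apex]

lemma snocZero_injective : Function.Injective (snocZero d) :=
  fun x y h => funext fun j => by simpa using congrFun h j.castSucc

lemma apex_mul (a t : ℝ) : apex d (a * t) = a • apex d t := by
  ext i
  refine Fin.lastCases ?_ (fun j => ?_) i <;> simp

lemma apex_add (s t : ℝ) : apex d (s + t) = apex d s + apex d t := by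
  ext i
  refine Fin.lastCases ?_ (fun j => ?_) i <;> simp

lemma snoc_eq_snocZero_add_apex (x : Fin d → ℝ) (t : ℝ) :
    Fin.snoc x t = snocZero d x + apex d t := by
  ext i
  refine Fin.lastCases ?_ (fun j => ?_) i <;> simp

lemma dotp_snoc (c : Fin (d + 1) → ℝ) (x : Fin d → ℝ) (t : ℝ) :
    dotp c (Fin.snoc x t) = dotp (Fin.init c) x + c (Fin.last d) * t := by
  simp [dotp, Fin.sum_univ_castSucc, Fin.init]

@[simp] lemma dotp_snocZero (c : Fin (d + 1) → ℝ) (x : Fin d → ℝ) :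
    dotp c (snocZero d x) = dotp (Fin.init c) x := by
  simp [snocZero, dotp_snoc]

@[simp] lemma dotp_apex (c : Fin (d + 1) → ℝ) (t : ℝ) :
    dotp c (apex d t) = c (Fin.last d) * t := by
  rw [apex, dotp_snoc]
  simp [dotp]

lemma isLatticePt_snoc {x : Fin d → ℝ} {t : ℝ} :
    IsLatticePt (Fin.snoc x t : Fin (d + 1) → ℝ) ↔ IsLatticePt x ∧ ∃ m : ℤ, t = m := by
  simp [IsLatticePt, Fin.forall_fin_succ']

lemma IsLatticePt.snocZero {x : Fin d → ℝ} (hx : IsLatticePt x) : IsLatticePt (snocZero d x) :=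
  isLatticePt_snoc.2 ⟨hx, 0, by simp⟩

lemma isLatticePt_apex (m : ℤ) : IsLatticePt (apex d m) :=
  isLatticePt_snoc.2 ⟨fun _ => ⟨0, by simp⟩, m, rfl⟩

lemma isLatticePolytope_bipyramid {P : Set (Fin d → ℝ)} (hP : IsLatticePolytope P) :
    IsLatticePolytope (bipyramid P) := by
  classical
  obtain ⟨V, hV, rfl⟩ := hP
  refine ⟨V.image (snocZero d) ∪ {apex d (-1), apex d 1}, ?_, ?_⟩
  · simp only [Finset.mem_union, Finset.mem_image, Finset.mem_insert, Finset.mem_singleton]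
    rintro _ (⟨x, hx, rfl⟩ | rfl | rfl)
    · exact (hV x hx).snocZero
    · exact_mod_cast isLatticePt_apex (-1)
    · exact_mod_cast isLatticePt_apex 1
  · rw [bipyramid, (snocZero d).image_convexHull, convexHull_convexHull_union_left]
    push_cast
    rfl

lemma snocZero_mem_bipyramid {P : Set (Fin d → ℝ)} {x : Fin d → ℝ} (hx : x ∈ P) :
    snocZero d x ∈ bipyramid P :=
  subset_convexHull ℝ _ (Or.inl (mem_image_of_mem _ hx))

lemma apex_mem_bipyramid (P : Set (Fin d → ℝ)) {t : ℝ} (ht : |t| ≤ 1) :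
    apex d t ∈ bipyramid P := by
  have hbot : apex d (-1) ∈ bipyramid P := subset_convexHull ℝ _ (Or.inr (Or.inl rfl))
  have htop : apex d 1 ∈ bipyramid P := subset_convexHull ℝ _ (Or.inr (Or.inr rfl))
  obtain ⟨ht₁, ht₂⟩ := abs_le.1 ht
  refine (convex_convexHull ℝ _).segment_subset hbot htop
    ⟨(1 - t) / 2, (1 + t) / 2, by linarith, by linarith, by ring, ?_⟩
  rw [← apex_mul, ← apex_mul, ← apex_add]
  congr 1
  ring

lemma zero_mem_interior_bipyramid {P : Set (Fin d → ℝ)} (h0 : (0 : Fin d → ℝ) ∈ interior P) :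
    (0 : Fin (d + 1) → ℝ) ∈ interior (bipyramid P) := by
  set U := {z : Fin (d + 1) → ℝ | (2 : ℝ) • Fin.init z ∈ interior P ∧ |2 * z (Fin.last d)| < 1}
  have hU : IsOpen U :=
    (isOpen_interior.preimage (f := fun z : Fin (d + 1) → ℝ => (2 : ℝ) • Fin.init z)
      (by fun_prop)).inter
      (isOpen_lt (f := fun z : Fin (d + 1) → ℝ => |2 * z (Fin.last d)|) (by fun_prop)
        continuous_const)
  have h0U : (0 : Fin (d + 1) → ℝ) ∈ U := ⟨by convert h0; ext; simp [Fin.init], by simp⟩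
  refine mem_interior.2 ⟨U, fun z hz => ?_, hU, h0U⟩
  have hzeq : z = (1 / 2 : ℝ) • snocZero d ((2 : ℝ) • Fin.init z)
      + (1 / 2 : ℝ) • apex d (2 * z (Fin.last d)) := by
    ext i
    refine Fin.lastCases ?_ (fun j => ?_) i <;> simp [Fin.init]
  rw [hzeq]
  exact convex_convexHull ℝ _ (snocZero_mem_bipyramid (interior_subset hz.1))
    (apex_mem_bipyramid P hz.2.le) (by norm_num) (by norm_num) (by norm_num)

end Bipyramid

section Pyramid

variable {d : ℕ}

lemma extremePoints_convexHull_insert_apex {G : Set (Fin d → ℝ)} (hG : Convex ℝ G) {s : ℝ}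
    (hs : s ≠ 0) :
    extremePoints ℝ (convexHull ℝ (insert (apex d s) (snocZero d '' G))) =
      insert (apex d s) (snocZero d '' extremePoints ℝ G) := by
  set A := insert (apex d s) (snocZero d '' G)
  -- the apex and the base are the faces on which `z ↦ ± s * z (Fin.last d)` is maximal
  have htop : IsExtreme ℝ (convexHull ℝ A) {apex d s} := by
    have hle : ∀ z ∈ A, dotp (apex d s) z ≤ s * s := by
      rintro _ (rfl | ⟨x, -, rfl⟩) <;> simp [mul_self_nonneg]
    convert (isFace_convexHull_sep hle).isExtreme
    rw [← convexHull_singleton (𝕜 := ℝ) (apex d s)]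
    congr 1
    ext z
    constructor
    · rintro rfl
      exact ⟨mem_insert _ _, by simp⟩
    · rintro ⟨rfl | ⟨x, -, rfl⟩, h⟩
      · rfl
      · simp [hs] at h
  have hbase : IsExtreme ℝ (convexHull ℝ A) (snocZero d '' G) := by
    have hle : ∀ z ∈ A, dotp (apex d (-s)) z ≤ 0 := by
      rintro _ (rfl | ⟨x, -, rfl⟩) <;> simp [mul_self_nonneg]
    convert (isFace_convexHull_sep hle).isExtreme
    rw [← (hG.linear_image (snocZero d)).convexHull_eq]
    congr 1
    ext z
    refine ⟨fun hz => ⟨mem_insert_of_mem _ hz, ?_⟩, ?_⟩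
    · obtain ⟨x, -, rfl⟩ := hz
      simp
    · rintro ⟨rfl | hz, h⟩
      · simp [hs] at h
      · exact hz
  rw [← extremePoints_image_of_injective snocZero_injective]
  ext x
  refine ⟨fun hx => ?_, ?_⟩
  · rcases extremePoints_convexHull_subset hx with rfl | hxG
    · exact mem_insert _ _
    · exact Or.inr (hbase.extremePoints_eq ▸ ⟨hxG, hx⟩)
  · rintro (rfl | hx)
    exacts [htop.mem_extremePoints, hbase.extremePoints_subset_extremePoints hx]

lemma IsLatticeBasisSet.insert_apex {B : Set (Fin d → ℝ)} (hB : IsLatticeBasisSet B) {s : ℝ}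
    (hs : s = 1 ∨ s = -1) : IsLatticeBasisSet (insert (apex d s) (snocZero d '' B)) := by
  obtain ⟨hli, hspan⟩ := hB
  have hapex : apex d s ∉ Submodule.span ℝ (snocZero d '' B) := by
    intro h
    rw [Submodule.span_image] at h
    obtain ⟨x, -, hx⟩ := h
    have := congrFun hx (Fin.last d)
    rcases hs with rfl | rfl <;> simp at this
  refine ⟨?_, le_antisymm ?_ ?_⟩
  · show LinearIndepOn ℝ id _
    rw [linearIndepOn_id_insert fun h => hapex (Submodule.subset_span h)]
    exact ⟨LinearIndepOn.id_image (hli.map' _ (LinearMap.ker_eq_bot.2 snocZero_injective)),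
      hapex⟩
  · rw [Submodule.span_le]
    rintro _ (rfl | ⟨x, hx, rfl⟩) <;> rw [SetLike.mem_coe, mem_latticeSubmodule_iff]
    · rcases hs with rfl | rfl
      exacts [by exact_mod_cast isLatticePt_apex 1, by exact_mod_cast isLatticePt_apex (-1)]
    · exact (mem_latticeSubmodule_iff.1 (hspan ▸ Submodule.subset_span hx)).snocZero
  · rw [latticeSubmodule, Submodule.span_le]
    intro z hz
    obtain ⟨hinit, m, hm⟩ := isLatticePt_snoc.1 ((Fin.snoc_init_self z).symm ▸ hz)
    have hbase : snocZero d (Fin.init z) ∈ Submodule.span ℤ (snocZero d '' B) := by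
      rw [← mem_latticeSubmodule_iff, ← hspan] at hinit
      exact Submodule.apply_mem_span_image_of_mem_span ((snocZero d).restrictScalars ℤ) hinit
    have hss : s * s = 1 := by rcases hs with rfl | rfl <;> norm_num
    obtain ⟨k, hk⟩ : ∃ k : ℤ, (k : ℝ) = m * s := by
      rcases hs with rfl | rfl
      exacts [⟨m, by simp⟩, ⟨-m, by simp⟩]
    have hz : z = snocZero d (Fin.init z) + (k : ℝ) • apex d s := by
      conv_lhs => rw [← Fin.snoc_init_self z]
      rw [snoc_eq_snocZero_add_apex, hm, hk, ← apex_mul, mul_assoc, hss, mul_one]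
    rw [SetLike.mem_coe, hz, Int.cast_smul_eq_zsmul]
    exact add_mem (Submodule.span_mono (subset_insert _ _) hbase)
      (Submodule.smul_mem _ _ (Submodule.subset_span (mem_insert _ _)))

end Pyramid

section Facets

variable {d : ℕ}

lemma sep_bipyramid_dotp_eq {P : Set (Fin d → ℝ)} {c : Fin (d + 1) → ℝ} {b : ℝ}
    (hle : ∀ z ∈ bipyramid P, dotp c z ≤ b) (hb : 0 < b) :
    {z ∈ bipyramid P | dotp c z = b} =
        convexHull ℝ (snocZero d '' {x ∈ P | dotp (Fin.init c) x = b}) ∨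
      ∃ s : ℝ, (s = 1 ∨ s = -1) ∧ {z ∈ bipyramid P | dotp c z = b} =
        convexHull ℝ (insert (apex d s) (snocZero d '' {x ∈ P | dotp (Fin.init c) x = b})) := by
  rw [bipyramid, sep_convexHull_dotp_eq fun z hz => hle z (subset_convexHull ℝ _ hz)]
  have hbase : {z ∈ snocZero d '' P | dotp c z = b} =
      snocZero d '' {x ∈ P | dotp (Fin.init c) x = b} := by
    ext z
    simp only [mem_sep_iff, mem_image]
    constructor
    · rintro ⟨⟨x, hx, rfl⟩, hxb⟩
      exact ⟨x, ⟨hx, by simpa using hxb⟩, rfl⟩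
    · rintro ⟨x, ⟨hx, hxb⟩, rfl⟩
      exact ⟨⟨x, hx, rfl⟩, by simpa using hxb⟩
  have hsplit : {z ∈ snocZero d '' P ∪ {apex d (-1), apex d 1} | dotp c z = b} =
      {z ∈ snocZero d '' P | dotp c z = b} ∪
        {z ∈ ({apex d (-1), apex d 1} : Set _) | dotp c z = b} :=
    sep_union
  rw [hsplit, hbase]
  by_cases h : ∃ s : ℝ, (s = 1 ∨ s = -1) ∧ c (Fin.last d) * s = b
  · obtain ⟨s, hs, hcs⟩ := h
    refine Or.inr ⟨s, hs, ?_⟩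
    have happex : {z ∈ ({apex d (-1), apex d 1} : Set _) | dotp c z = b} = {apex d s} := by
      ext z
      constructor
      · rintro ⟨hz, hzb⟩
        -- the level `b > 0` cannot be attained at both `apex d 1` and `apex d (-1)`
        rcases hz with rfl | rfl <;> rcases hs with rfl | rfl <;>
          simp only [dotp_apex, mul_neg, mul_one, mem_singleton_iff] at hzb ⊢ <;> linarith
      · rintro rfl
        exact ⟨by rcases hs with rfl | rfl <;> simp, by simpa using hcs⟩
    rw [happex, union_singleton]
  · refine Or.inl ?_
    have happex : {z ∈ ({apex d (-1), apex d 1} : Set _) | dotp c z = b} = ∅ := by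
      refine eq_empty_of_forall_notMem ?_
      rintro z ⟨hz | hz, hzb⟩ <;> subst hz
      exacts [h ⟨-1, Or.inr rfl, by simpa using hzb⟩, h ⟨1, Or.inl rfl, by simpa using hzb⟩]
    rw [happex, union_empty]

theorem isLatticeBasisSet_extremePoints_of_isFacet_bipyramid (hd : 0 < d)
    {P : Set (Fin d → ℝ)} (hP : Convex ℝ P) (h0 : (0 : Fin d → ℝ) ∈ interior P)
    (hfacets : ∀ G, IsFacet P G → IsLatticeBasisSet (extremePoints ℝ G))
    {F : Set (Fin (d + 1) → ℝ)} (hF : IsFacet (bipyramid P) F) :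
    IsLatticeBasisSet (extremePoints ℝ F) := by
  obtain ⟨⟨c, b, hle, rfl⟩, hdim⟩ := hF
  have hQ0 := zero_mem_interior_bipyramid h0
  have hb : 0 < b := pos_of_sep_dotp_eq_ne hQ0 hle fun h => by
    rw [h, fdim_eq_of_nonempty_interior ⟨0, hQ0⟩] at hdim
    omega
  have hcases := sep_bipyramid_dotp_eq hle hb
  set G := {x ∈ P | dotp (Fin.init c) x = b}
  have hGdim : fdim G < d := fdim_lt_of_forall_dotp_eq hd hb.ne' fun x hx => hx.2
  have hGimage := fdim_image_le (snocZero d) G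
  rcases hcases with hF | ⟨s, hs, hF⟩ <;> rw [hF, fdim_convexHull] at hdim
  · omega
  have hGfacet : IsFacet P G := by
    refine ⟨⟨Fin.init c, b, fun x hx => ?_, rfl⟩, ?_⟩
    · simpa using hle _ (snocZero_mem_bipyramid hx)
    · have := fdim_insert_le (snocZero d '' G) (apex d s)
      omega
  have hs0 : s ≠ 0 := by rcases hs with rfl | rfl <;> norm_num
  have hGconv : Convex ℝ G := hP.inter (convex_hyperplane (isLinearMap_dotp _) b)
  rw [hF, extremePoints_convexHull_insert_apex hGconv hs0]
  exact (hfacets G hGfacet).insert_apex hs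

lemma IsSmoothFano.dim_pos {P : Set (Fin d → ℝ)} (hP : IsSmoothFano P) : 0 < d := by
  obtain ⟨-, h0, -, hfacets⟩ := hP
  refine Nat.pos_of_ne_zero fun hd => ?_
  subst hd
  -- as `0 - 1 = 0` in `ℕ`, in dimension `0` the polytope is a facet of itself
  have hfacet : IsFacet P P :=
    ⟨⟨0, 0, fun x _ => by simp [dotp], by simp [dotp]⟩, Module.finrank_zero_of_subsingleton⟩
  have h0ext : (0 : Fin 0 → ℝ) ∈ extremePoints ℝ P := by
    rw [extremePoints_eq_self]
    exact interior_subset h0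
  exact (hfacets P hfacet).1.ne_zero ⟨0, h0ext⟩ rfl

end Facets

/-- The bipyramid `conv((P×{0}) ∪ {−e_{d+1}, e_{d+1}})` over a smooth Fano
polytope is a smooth Fano polytope. -/
theorem stmt13 {d : ℕ} (P : Set (Fin d → ℝ)) (hP : IsSmoothFano P) :
    IsSmoothFano (convexHull ℝ
      ((fun x : Fin d → ℝ => Fin.snoc x (0 : ℝ)) '' P ∪
        {Fin.snoc (0 : Fin d → ℝ) (-1 : ℝ), Fin.snoc (0 : Fin d → ℝ) (1 : ℝ)})) := by
  have hd := hP.dim_pos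
  obtain ⟨hlat, h0, -, hfacets⟩ := hP
  have hQ0 : (0 : Fin (d + 1) → ℝ) ∈ interior (bipyramid P) := zero_mem_interior_bipyramid h0
  exact ⟨isLatticePolytope_bipyramid hlat, hQ0, fdim_eq_of_nonempty_interior ⟨0, hQ0⟩,
    fun F hF => isLatticeBasisSet_extremePoints_of_isFacet_bipyramid hd hlat.convex h0 hfacets hF⟩
end
end
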